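/- Let A = K[[f_1,…,f_s]] ⊆ F = K[[x_1,…,x_n]] with the length of F/A as an A-module finite, and let a, b ∈ (ℝ_{>0})^n. If in(A,a) ⊆ in(A,b), then in(A,a) = in(A,b). Equivalently, if in(A,a) ≠ in(A,b) then in(A,a) is not contained in in(A,b). -/

import Mathlib

noncomputable section

namespace CanonicalFan

open MvPowerSeries

variable (K : Type*) [Field K] (n : ℕ)

/-- The weight `⟨a, α⟩ = ∑ i, a i * α i` of an exponent `α` with respect to `a`. -/
def weight (a : Fin n → ℝ) (α : Fin n →₀ ℕ) : ℝ := ∑ i, a i * (α i : ℝ)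

/-- The support of a formal power series. -/
def supp (f : MvPowerSeries (Fin n) K) : Set (Fin n →₀ ℕ) :=
  {α | MvPowerSeries.coeff α f ≠ 0}

/-- The `a`-valuation `ν(f,a)`, with the convention `ν(0,a) = +∞`. -/
def nu (a : Fin n → ℝ) (f : MvPowerSeries (Fin n) K) : EReal :=
  sInf ((fun α => ((weight n a α : ℝ) : EReal)) '' supp K n f)

open Classical in
/-- The `a`-initial form `in(f,a)` of a power series. -/
def initialForm (a : Fin n → ℝ) (f : MvPowerSeries (Fin n) K) :
    MvPowerSeries (Fin n) K :=
  fun α => if ((weight n a α : ℝ) : EReal) = nu K n a f then MvPowerSeries.coeff α f else 0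

open Classical in
/-- `exp(f,a)`: the `≺`-maximal element of the support of `in(f,a)`, where `≺` is the
well-ordering `r` (junk value `0` if no maximal element exists). -/
def exponent (r : (Fin n →₀ ℕ) → (Fin n →₀ ℕ) → Prop) (a : Fin n → ℝ)
    (f : MvPowerSeries (Fin n) K) : Fin n →₀ ℕ :=
  if h : ∃ β ∈ supp K n (initialForm K n a f),
      ∀ γ ∈ supp K n (initialForm K n a f), γ = β ∨ r γ β
  then h.choose else 0

/-- The `a`-leading monomial `M(f,a) = c_{exp(f,a)} x^{exp(f,a)}`. -/
def leadMon (r : (Fin n →₀ ℕ) → (Fin n →₀ ℕ) → Prop) (a : Fin n → ℝ)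
    (f : MvPowerSeries (Fin n) K) : MvPowerSeries (Fin n) K :=
  MvPowerSeries.monomial (exponent K n r a f)
    (MvPowerSeries.coeff (exponent K n r a f) f)

/-- The maximal ideal `(x_1, …, x_n)` of `K[[x_1,…,x_n]]`. -/
def mIdeal : Ideal (MvPowerSeries (Fin n) K) :=
  Ideal.span (Set.range (MvPowerSeries.X : Fin n → MvPowerSeries (Fin n) K))

/-- `K[[S]]`: the smallest `K`-subalgebra of `K[[x_1,…,x_n]]` containing `S` and closed in
the `(x_1,…,x_n)`-adic topology; concretely, the adic closure of `Algebra.adjoin K S`. -/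
def closedAdjoin (S : Set (MvPowerSeries (Fin n) K)) :
    Subalgebra K (MvPowerSeries (Fin n) K) where
  carrier := {f | ∀ N : ℕ, ∃ g ∈ Algebra.adjoin K S, f - g ∈ (mIdeal K n) ^ N}
  algebraMap_mem' c N :=
    ⟨algebraMap K _ c, Subalgebra.algebraMap_mem _ c, by simp [Ideal.zero_mem]⟩
  add_mem' {f g} hf hg N := by
    obtain ⟨p, hp, hfp⟩ := hf N
    obtain ⟨q, hq, hgq⟩ := hg N
    exact ⟨p + q, add_mem hp hq, by simpa [add_sub_add_comm] using Ideal.add_mem _ hfp hgq⟩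
  mul_mem' {f g} hf hg N := by
    obtain ⟨p, hp, hfp⟩ := hf N
    obtain ⟨q, hq, hgq⟩ := hg N
    refine ⟨p * q, mul_mem hp hq, ?_⟩
    have h : f * g - p * q = f * (g - q) + (f - p) * q := by ring
    rw [h]
    exact Ideal.add_mem _ (Ideal.mul_mem_left _ _ hgq) (Ideal.mul_mem_right _ _ hfp)

/-- `exp(A,a) = {exp(f,a) : f ∈ A, f ≠ 0}`. -/
def expSet (r : (Fin n →₀ ℕ) → (Fin n →₀ ℕ) → Prop) (a : Fin n → ℝ)
    (A : Set (MvPowerSeries (Fin n) K)) : Set (Fin n →₀ ℕ) :=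
  {β | ∃ f ∈ A, f ≠ 0 ∧ exponent K n r a f = β}

/-- `in(A,a) = K[[in(f,a) : f ∈ A ∖ {0}]]`. -/
def inAlgebra (a : Fin n → ℝ) (A : Set (MvPowerSeries (Fin n) K)) :
    Subalgebra K (MvPowerSeries (Fin n) K) :=
  closedAdjoin K n {g | ∃ f ∈ A, f ≠ 0 ∧ initialForm K n a f = g}

/-- `M(A,a) = K[[M(f,a) : f ∈ A ∖ {0}]]`. -/
def leadAlgebra (r : (Fin n →₀ ℕ) → (Fin n →₀ ℕ) → Prop) (a : Fin n → ℝ)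
    (A : Set (MvPowerSeries (Fin n) K)) : Subalgebra K (MvPowerSeries (Fin n) K) :=
  closedAdjoin K n {g | ∃ f ∈ A, f ≠ 0 ∧ leadMon K n r a f = g}

set_option synthInstance.maxHeartbeats 1000000 in
/-- The length of `F/A` as an `A`-module is finite. -/
def FiniteColength (A : Subalgebra K (MvPowerSeries (Fin n) K)) : Prop :=
  IsFiniteLength A
    (MvPowerSeries (Fin n) K ⧸ LinearMap.range (Algebra.linearMap A (MvPowerSeries (Fin n) K)))

/-- `{g_1,…,g_r}` is an `a`-canonical basis of `A`. -/
def IsCanonicalBasis (r : (Fin n →₀ ℕ) → (Fin n →₀ ℕ) → Prop) (a : Fin n → ℝ)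
    (A : Subalgebra K (MvPowerSeries (Fin n) K)) {m : ℕ}
    (g : Fin m → MvPowerSeries (Fin n) K) : Prop :=
  (∀ i, g i ∈ A ∧ g i ≠ 0) ∧
    leadAlgebra K n r a (A : Set (MvPowerSeries (Fin n) K)) =
      closedAdjoin K n (Set.range fun i => leadMon K n r a (g i))

/-- `{g_1,…,g_r}` is a minimal `a`-canonical basis of `A`. -/
def IsMinimalCanonicalBasis (r : (Fin n →₀ ℕ) → (Fin n →₀ ℕ) → Prop) (a : Fin n → ℝ)
    (A : Subalgebra K (MvPowerSeries (Fin n) K)) {m : ℕ}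
    (g : Fin m → MvPowerSeries (Fin n) K) : Prop :=
  IsCanonicalBasis K n r a A g ∧
    ∀ T : Set (MvPowerSeries (Fin n) K),
      T ⊂ Set.range (fun i => leadMon K n r a (g i)) →
        closedAdjoin K n T ≠ leadAlgebra K n r a (A : Set (MvPowerSeries (Fin n) K))

/-- `{g_1,…,g_r}` is the `a`-reduced canonical basis of `A`. -/
def IsReducedCanonicalBasis (r : (Fin n →₀ ℕ) → (Fin n →₀ ℕ) → Prop) (a : Fin n → ℝ)
    (A : Subalgebra K (MvPowerSeries (Fin n) K)) {m : ℕ}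
    (g : Fin m → MvPowerSeries (Fin n) K) : Prop :=
  IsMinimalCanonicalBasis K n r a A g ∧
    (∀ i, MvPowerSeries.coeff (exponent K n r a (g i)) (g i) = 1) ∧
    ∀ i, ∀ α ∈ supp K n (g i - leadMon K n r a (g i)),
      (MvPowerSeries.monomial α (1 : K)) ∉
        closedAdjoin K n (Set.range fun j => leadMon K n r a (g j))

/-- A power series is a (nonzero) monomial. -/
def IsMonomial (g : MvPowerSeries (Fin n) K) : Prop :=
  ∃ (α : Fin n →₀ ℕ) (c : K), c ≠ 0 ∧ g = MvPowerSeries.monomial α c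

/-!
Since `A` is closed and of finite colength, `m^N ⊆ A` for some `N`. Then every `in(A, w)` with
`w` positive contains `m^N` as well, so it is determined by its image in `F/m^N`, the space of
coefficient vectors in degrees `< N`. That image has, for the filtration by `w`-weight, the same
associated graded as the image of `A`, hence the same dimension. So `in(A, a) ⊆ in(A, b)` both
contain `m^N` and have images of equal finite dimension in `F/m^N`, and they coincide.
-/

theorem eq_of_map_eq_of_ker_le {R M M' : Type*} [Ring R] [AddCommGroup M] [Module R M]
    [AddCommGroup M'] [Module R M'] {φ : M →ₗ[R] M'} {p q : Submodule R M}
    (hp : LinearMap.ker φ ≤ p) (hq : LinearMap.ker φ ≤ q) (h : p.map φ = q.map φ) : p = q := by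
  rw [← sup_eq_left.2 hp, ← sup_eq_left.2 hq, ← Submodule.comap_map_eq, h, Submodule.comap_map_eq]

section WeightFiltration

variable {ι R : Type*} [Semiring R] (wt : ι → ℝ)

def weightSupported (S : Set ℝ) : Submodule R (ι → R) :=
  Submodule.pi {i | wt i ∉ S} fun _ => ⊥

def weightProj (t : ℝ) : (ι → R) →ₗ[R] ι → R :=
  LinearMap.pi fun i => if wt i = t then LinearMap.proj i else 0

/-- `gr_t W = W_{≥ t} / W_{> t}` for the filtration by weight, realised inside `ι → R` as the
image of `W_{≥ t}` under the projection to the coordinates of weight `t`. -/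
def gradedPiece (W : Submodule R (ι → R)) (t : ℝ) : Submodule R (ι → R) :=
  (W ⊓ weightSupported wt (Set.Ici t)).map (weightProj wt t)

def weights [Finite ι] : Finset ℝ := (Set.finite_range wt).toFinset

variable {wt}

theorem mem_weightSupported {S : Set ℝ} {v : ι → R} :
    v ∈ weightSupported wt S ↔ ∀ i, wt i ∉ S → v i = 0 := by
  simp [weightSupported]

theorem weightSupported_congr {S S' : Set ℝ} (h : ∀ i, wt i ∈ S ↔ wt i ∈ S') :
    (weightSupported wt S : Submodule R (ι → R)) = weightSupported wt S' := by
  ext v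
  simp only [mem_weightSupported, h]

theorem weightSupported_eq_bot {S : Set ℝ} (h : ∀ i, wt i ∉ S) :
    (weightSupported wt S : Submodule R (ι → R)) = ⊥ := by
  ext v
  simp only [mem_weightSupported, Submodule.mem_bot, funext_iff, Pi.zero_apply]
  exact ⟨fun hv i => hv i (h i), fun hv i _ => hv i⟩

theorem weightSupported_eq_top {S : Set ℝ} (h : ∀ i, wt i ∈ S) :
    (weightSupported wt S : Submodule R (ι → R)) = ⊤ := by
  ext v
  simp only [mem_weightSupported, Submodule.mem_top, iff_true]
  exact fun i hi => absurd (h i) hi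

theorem weightProj_apply (t : ℝ) (v : ι → R) (i : ι) :
    weightProj wt t v i = if wt i = t then v i else 0 := by
  by_cases h : wt i = t <;> simp [weightProj, h]

theorem weightProj_weightProj (t u : ℝ) (v : ι → R) :
    weightProj wt t (weightProj wt u v) = if t = u then weightProj wt t v else 0 := by
  ext i
  by_cases hi : wt i = t <;> split_ifs <;> simp_all [weightProj_apply]

theorem weightProj_mem_weightSupported {t : ℝ} {S : Set ℝ} (ht : t ∈ S) (v : ι → R) :
    weightProj wt t v ∈ weightSupported wt S := by
  rw [mem_weightSupported]
  intro i hi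
  rw [weightProj_apply, if_neg (by rintro rfl; exact hi ht)]

theorem weightSupported_Ici_inf_ker (t : ℝ) :
    (weightSupported wt (Set.Ici t) ⊓ LinearMap.ker (weightProj wt t) : Submodule R (ι → R)) =
      weightSupported wt (Set.Ioi t) := by
  ext v
  simp only [Submodule.mem_inf, mem_weightSupported, LinearMap.mem_ker, funext_iff,
    weightProj_apply, Pi.zero_apply, Set.mem_Ici, Set.mem_Ioi, not_le, not_lt]
  constructor
  · rintro ⟨hlt, heq⟩ i hi
    rcases hi.lt_or_eq with hi | hi
    · exact hlt i hi
    · simpa [hi] using heq i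
  · intro h
    exact ⟨fun i hi => h i hi.le, fun i => by split_ifs with hi; exacts [h i hi.le, rfl]⟩

end WeightFiltration

section GradedDimension

variable {ι R : Type*} [Field R] [Finite ι] {wt : ι → ℝ}

theorem finrank_gradedPiece_add (W : Submodule R (ι → R)) (t : ℝ) :
    Module.finrank R (gradedPiece wt W t) +
        Module.finrank R ↥(W ⊓ weightSupported wt (Set.Ioi t)) =
      Module.finrank R ↥(W ⊓ weightSupported wt (Set.Ici t)) := by
  have hker : Module.finrank R
      (LinearMap.ker ((weightProj wt t).domRestrict (W ⊓ weightSupported wt (Set.Ici t)))) =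
        Module.finrank R ↥(W ⊓ weightSupported wt (Set.Ioi t)) := by
    rw [LinearMap.ker_domRestrict, ← Submodule.finrank_map_subtype_eq,
      Submodule.map_comap_subtype, inf_assoc, weightSupported_Ici_inf_ker]
  rw [← hker, gradedPiece, ← LinearMap.range_domRestrict]
  exact LinearMap.finrank_range_add_finrank_ker _

theorem finrank_inf_weightSupported_Ioi (W : Submodule R (ι → R)) (S : Finset ℝ) :
    ∀ t, (weights wt).filter (t < ·) = S →
      Module.finrank R ↥(W ⊓ weightSupported wt (Set.Ioi t)) =
        ∑ u ∈ S, Module.finrank R (gradedPiece wt W u) := by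
  classical
  have mem_filter (t u : ℝ) : u ∈ (weights wt).filter (t < ·) ↔ (∃ i, wt i = u) ∧ t < u := by
    simp [weights]
  induction S using Finset.induction_on_min with
  | empty =>
    intro t hS
    have hbot : ∀ i, wt i ∉ Set.Ioi t := fun i hi => by
      simpa [hS] using (mem_filter t (wt i)).2 ⟨⟨i, rfl⟩, hi⟩
    simp [weightSupported_eq_bot hbot]
  | insert a s ha ih =>
    intro t hS
    have hmem (u : ℝ) (hu : ∃ i, wt i = u) : t < u ↔ u = a ∨ u ∈ s := by
      rw [← Finset.mem_insert, ← hS, mem_filter]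
      exact ⟨fun h => ⟨hu, h⟩, fun h => h.2⟩
    have hta : t < a := ((mem_filter t a).1 (hS ▸ Finset.mem_insert_self a s)).2
    have hIoi : (weightSupported wt (Set.Ioi t) : Submodule R (ι → R)) =
        weightSupported wt (Set.Ici a) :=
      weightSupported_congr fun i => by
        rw [Set.mem_Ioi, Set.mem_Ici]
        refine ⟨fun h => ?_, hta.trans_le⟩
        rcases (hmem _ ⟨i, rfl⟩).1 h with h | h
        exacts [h.ge, (ha _ h).le]
    have hs : (weights wt).filter (a < ·) = s := by
      ext u
      rw [mem_filter]
      refine ⟨fun ⟨hu, hau⟩ => ((hmem u hu).1 (hta.trans hau)).resolve_left hau.ne', fun hu => ?_⟩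
      exact ⟨((mem_filter t u).1 (hS ▸ Finset.mem_insert_of_mem hu)).1, ha u hu⟩
    rw [hIoi, ← finrank_gradedPiece_add, ih a hs, Finset.sum_insert (fun h => (ha a h).false)]

theorem finrank_eq_sum_finrank_gradedPiece (W : Submodule R (ι → R)) :
    Module.finrank R W = ∑ t ∈ weights wt, Module.finrank R (gradedPiece wt W t) := by
  obtain ⟨b, hb⟩ := (weights wt).bddBelow
  have hweights : (weights wt).filter (b - 1 < ·) = weights wt :=
    Finset.filter_true_of_mem fun u hu => by linarith [hb hu]
  have htop : (weightSupported wt (Set.Ioi (b - 1)) : Submodule R (ι → R)) = ⊤ :=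
    weightSupported_eq_top fun i => by
      have : wt i ∈ weights wt := by simp [weights]
      simp only [Set.mem_Ioi]
      linarith [hb this]
  rw [← finrank_inf_weightSupported_Ioi W _ (b - 1) hweights, htop, inf_top_eq]

end GradedDimension

section MaximalIdeal

variable {K n}

theorem le_order_of_mem_pow_mIdeal {N : ℕ} {f : MvPowerSeries (Fin n) K}
    (hf : f ∈ mIdeal K n ^ N) : (N : ℕ∞) ≤ f.order := by
  have hm : ∀ g ∈ mIdeal K n, 1 ≤ g.order := fun g hg => by
    rw [one_le_order_iff_constCoeff_eq_zero]
    refine (Ideal.span_le (I := RingHom.ker constantCoeff)).2 ?_ hg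
    rintro - ⟨i, rfl⟩
    exact constantCoeff_X i
  induction hf using Submodule.pow_induction_on_left' with
  | algebraMap => simp
  | add x y i _ _ hx hy => exact (le_min hx hy).trans min_order_le_add
  | mem_mul g hg i x _ hx =>
    calc ((i.succ : ℕ) : ℕ∞) = 1 + i := by push_cast; ring
      _ ≤ g.order + x.order := add_le_add (hm g hg) hx
      _ ≤ (g * x).order := le_order_mul

open Classical in
/-- The terms of `f` whose smallest variable is `X i`, divided by `X i`. -/
def divXFirst (i : Fin n) (f : MvPowerSeries (Fin n) K) : MvPowerSeries (Fin n) K :=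
  fun β => if (β + Finsupp.single i 1).support.min = (i : WithTop (Fin n)) then
    coeff (β + Finsupp.single i 1) f else 0

theorem coeff_X_mul_divXFirst (i : Fin n) (f : MvPowerSeries (Fin n) K) (α : Fin n →₀ ℕ) :
    coeff α (X i * divXFirst i f) =
      if α.support.min = (i : WithTop (Fin n)) then coeff α f else 0 := by
  rw [X_def, coeff_monomial_mul, one_mul]
  by_cases hle : Finsupp.single i 1 ≤ α
  · rw [if_pos hle]
    show (if _ then _ else _) = _
    rw [tsub_add_cancel_of_le hle]
  · rw [if_neg hle, if_neg]
    intro hmin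
    exact hle (Finsupp.single_le_iff.2 (Nat.one_le_iff_ne_zero.2
      (Finsupp.mem_support_iff.1 (Finset.mem_of_min hmin))))

theorem eq_sum_X_mul_divXFirst {f : MvPowerSeries (Fin n) K} (hf : constantCoeff f = 0) :
    f = ∑ i, X i * divXFirst i f := by
  ext α
  simp_rw [map_sum, coeff_X_mul_divXFirst]
  rcases α.support.eq_empty_or_nonempty with hα | hα
  · rw [Finsupp.support_eq_empty.1 hα, coeff_zero_eq_constantCoeff_apply, hf]
    simp
  · obtain ⟨i₀, hi₀⟩ := Finset.min_of_nonempty hα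
    simp [hi₀]

theorem le_order_divXFirst {N : ℕ} {f : MvPowerSeries (Fin n) K}
    (hf : ((N + 1 : ℕ) : ℕ∞) ≤ f.order) (i : Fin n) : (N : ℕ∞) ≤ (divXFirst i f).order := by
  refine nat_le_order fun β hβ => ?_
  show (if _ then _ else _) = _
  rw [ite_eq_right_iff]
  refine fun _ => coeff_of_lt_order (lt_of_lt_of_le ?_ hf)
  simpa [map_add] using hβ

theorem mem_pow_mIdeal_of_le_order {N : ℕ} {f : MvPowerSeries (Fin n) K}
    (hf : (N : ℕ∞) ≤ f.order) : f ∈ mIdeal K n ^ N := by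
  induction N generalizing f with
  | zero => simp
  | succ N ih =>
    have hf0 : constantCoeff f = 0 :=
      one_le_order_iff_constCoeff_eq_zero.1 (le_trans (by simp) hf)
    rw [eq_sum_X_mul_divXFirst hf0, pow_succ']
    exact Ideal.sum_mem _ fun i _ =>
      Ideal.mul_mem_mul (Ideal.subset_span ⟨i, rfl⟩) (ih (le_order_divXFirst hf i))

theorem mem_pow_mIdeal_iff {N : ℕ} {f : MvPowerSeries (Fin n) K} :
    f ∈ mIdeal K n ^ N ↔ (N : ℕ∞) ≤ f.order :=
  ⟨le_order_of_mem_pow_mIdeal, mem_pow_mIdeal_of_le_order⟩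

end MaximalIdeal

section Truncation

variable {K n}

instance (N : ℕ) : Finite {α : Fin n →₀ ℕ // α.degree < N} :=
  (Finsupp.finite_of_degree_lt N).to_subtype

variable (K n) in
def coeffsBelow (N : ℕ) :
    MvPowerSeries (Fin n) K →ₗ[K] {α : Fin n →₀ ℕ // α.degree < N} → K :=
  LinearMap.pi fun α => coeff α.1

theorem coeffsBelow_apply (N : ℕ) (f : MvPowerSeries (Fin n) K) (α) :
    coeffsBelow K n N f α = coeff α.1 f := rfl

theorem coeffsBelow_eq_zero_iff {N : ℕ} {f : MvPowerSeries (Fin n) K} :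
    coeffsBelow K n N f = 0 ↔ f ∈ mIdeal K n ^ N := by
  rw [mem_pow_mIdeal_iff, funext_iff]
  refine ⟨fun h => nat_le_order fun α hα => h ⟨α, hα⟩, fun h α => ?_⟩
  exact coeff_of_lt_order (lt_of_lt_of_le (by exact_mod_cast α.2) h)

theorem coeffsBelow_truncTotal (N : ℕ) (f : MvPowerSeries (Fin n) K) :
    coeffsBelow K n N (truncTotal N f : MvPowerSeries (Fin n) K) = coeffsBelow K n N f := by
  ext α
  simp [coeffsBelow_apply, coeff_truncTotal _ α.2]

theorem subset_closedAdjoin (S : Set (MvPowerSeries (Fin n) K)) :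
    S ⊆ closedAdjoin K n S :=
  fun f hf N => ⟨f, Algebra.subset_adjoin hf, by simp⟩

theorem adjoin_le_closedAdjoin (S : Set (MvPowerSeries (Fin n) K)) :
    Algebra.adjoin K S ≤ closedAdjoin K n S :=
  fun f hf N => ⟨f, hf, by simp⟩

theorem map_coeffsBelow_closedAdjoin (N : ℕ) (S : Set (MvPowerSeries (Fin n) K)) :
    (Subalgebra.toSubmodule (closedAdjoin K n S)).map (coeffsBelow K n N) =
      (Subalgebra.toSubmodule (Algebra.adjoin K S)).map (coeffsBelow K n N) := by
  refine le_antisymm ?_ (Submodule.map_mono (adjoin_le_closedAdjoin S))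
  rintro - ⟨f, hf, rfl⟩
  obtain ⟨g, hg, hfg⟩ := hf N
  refine ⟨g, hg, ?_⟩
  rw [← sub_eq_zero, ← map_sub, coeffsBelow_eq_zero_iff, ← neg_sub]
  exact neg_mem hfg

theorem mem_closedAdjoin_of_forall_exists {S : Set (MvPowerSeries (Fin n) K)}
    {f : MvPowerSeries (Fin n) K}
    (h : ∀ M, ∃ g ∈ closedAdjoin K n S, f - g ∈ mIdeal K n ^ M) : f ∈ closedAdjoin K n S := by
  intro M
  obtain ⟨g, hg, hfg⟩ := h M
  obtain ⟨p, hp, hgp⟩ := hg M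
  exact ⟨p, hp, by simpa using Ideal.add_mem _ hfg hgp⟩

/-- Finite colength makes the chain `(m^k + A)/A` stabilise, say from `N` on; then
`m^N ⊆ m^(N+M) + A` for every `M`, so `m^N` lies in the closure of `A`. -/
theorem exists_pow_mIdeal_le_of_finiteColength {S : Set (MvPowerSeries (Fin n) K)}
    (hlen : FiniteColength K n (closedAdjoin K n S)) :
    ∃ N, ∀ f ∈ mIdeal K n ^ N, f ∈ closedAdjoin K n S := by
  set A := closedAdjoin K n S
  set R := LinearMap.range (Algebra.linearMap A (MvPowerSeries (Fin n) K))
  have : IsArtinian A (MvPowerSeries (Fin n) K ⧸ R) :=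
    (isFiniteLength_iff_isNoetherian_isArtinian.mp hlen).2
  let c : ℕ →o (Submodule A (MvPowerSeries (Fin n) K ⧸ R))ᵒᵈ :=
    ⟨fun k => OrderDual.toDual ((Submodule.restrictScalars A (mIdeal K n ^ k)).map R.mkQ),
      fun k l hkl => Submodule.map_mono fun x hx => Ideal.pow_le_pow_right hkl hx⟩
  obtain ⟨N, hN⟩ := IsArtinian.monotone_stabilizes c
  refine ⟨N, fun f hf => mem_closedAdjoin_of_forall_exists fun M => ?_⟩
  have hfc : R.mkQ f ∈ OrderDual.ofDual (c (N + M)) := hN (N + M) (by omega) ▸ ⟨f, hf, rfl⟩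
  obtain ⟨h, hh, hhf⟩ := hfc
  obtain ⟨a, ha⟩ := (Submodule.Quotient.eq R).mp hhf
  refine ⟨f - h, ?_, ?_⟩
  · rw [← neg_sub, ← ha]
    exact neg_mem a.2
  · rw [sub_sub_cancel]
    exact Ideal.pow_le_pow_right (by omega) hh

end Truncation

section Weights

variable {K n} {w : Fin n → ℝ}

theorem weight_add (α β : Fin n →₀ ℕ) : weight n w (α + β) = weight n w α + weight n w β := by
  simp only [weight, Finsupp.coe_add, Pi.add_apply, Nat.cast_add, mul_add, Finset.sum_add_distrib]

theorem mem_supp {f : MvPowerSeries (Fin n) K} {α : Fin n →₀ ℕ} :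
    α ∈ supp K n f ↔ coeff α f ≠ 0 := Iff.rfl

theorem supp_nonempty_iff {f : MvPowerSeries (Fin n) K} : (supp K n f).Nonempty ↔ f ≠ 0 :=
  (ne_zero_iff_exists_coeff_ne_zero f).symm

theorem finite_setOf_weight_le (hw : ∀ i, 0 < w i) (C : ℝ) :
    {α : Fin n →₀ ℕ | weight n w α ≤ C}.Finite := by
  refine (Set.finite_Iic (Finsupp.equivFunOnFinite.symm fun i => ⌈C / w i⌉₊)).subset ?_
  intro α hα
  refine Finsupp.le_def.2 fun i =>
    Nat.cast_le.1 ((le_div_iff₀' (hw i)).2 ?_ |>.trans (Nat.le_ceil _))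
  exact (Finset.single_le_sum (fun j _ => mul_nonneg (hw j).le (Nat.cast_nonneg _))
    (Finset.mem_univ i)).trans hα

theorem exists_isLeast_weight (hw : ∀ i, 0 < w i) {f : MvPowerSeries (Fin n) K} (hf : f ≠ 0) :
    ∃ t, IsLeast (weight n w '' supp K n f) t := by
  obtain ⟨α₀, hα₀⟩ := supp_nonempty_iff.2 hf
  obtain ⟨α, ⟨hα, -⟩, hmin⟩ :=
    Set.exists_min_image (supp K n f ∩ {β | weight n w β ≤ weight n w α₀}) (weight n w)
      ((finite_setOf_weight_le hw _).inter_of_right _) ⟨α₀, hα₀, le_refl (weight n w α₀)⟩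
  refine ⟨weight n w α, ⟨α, hα, rfl⟩, ?_⟩
  rintro - ⟨β, hβ, rfl⟩
  by_cases hβα₀ : weight n w β ≤ weight n w α₀
  · exact hmin β ⟨hβ, hβα₀⟩
  · exact (hmin α₀ ⟨hα₀, le_refl (weight n w α₀)⟩).trans (le_of_not_ge hβα₀)

theorem nu_eq_of_isLeast {f : MvPowerSeries (Fin n) K} {t : ℝ}
    (h : IsLeast (weight n w '' supp K n f) t) : nu K n w f = t := by
  rw [nu, ← Set.image_image (fun x : ℝ => (x : EReal))]
  exact (EReal.coe_strictMono.monotone.map_isLeast h).csInf_eq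

open Classical in
def weightPart (w : Fin n → ℝ) (t : ℝ) : MvPowerSeries (Fin n) K →ₗ[K] MvPowerSeries (Fin n) K :=
  LinearMap.pi fun α => if weight n w α = t then coeff α else 0

open Classical in
theorem coeff_weightPart (t : ℝ) (f : MvPowerSeries (Fin n) K) (α : Fin n →₀ ℕ) :
    coeff α (weightPart w t f) = if weight n w α = t then coeff α f else 0 := by
  show (if weight n w α = t then coeff α else 0) f = _
  split_ifs <;> rfl

theorem initialForm_eq_weightPart {f : MvPowerSeries (Fin n) K} {t : ℝ}
    (h : IsLeast (weight n w '' supp K n f) t) : initialForm K n w f = weightPart w t f := by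
  ext α
  rw [coeff_weightPart]
  show (if _ then _ else _) = _
  simp only [nu_eq_of_isLeast h, EReal.coe_eq_coe_iff]

theorem weightPart_ne_zero_iff {t : ℝ} {f : MvPowerSeries (Fin n) K} :
    weightPart w t f ≠ 0 ↔ t ∈ weight n w '' supp K n f := by
  rw [← supp_nonempty_iff]
  constructor
  · rintro ⟨α, hα⟩
    rw [mem_supp, coeff_weightPart, ite_ne_right_iff] at hα
    exact ⟨α, hα.2, hα.1⟩
  · rintro ⟨α, hα, rfl⟩
    exact ⟨α, by rwa [mem_supp, coeff_weightPart, if_pos rfl]⟩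

theorem weight_mem_lowerBounds_mul {t u : ℝ} {f g : MvPowerSeries (Fin n) K}
    (hf : t ∈ lowerBounds (weight n w '' supp K n f))
    (hg : u ∈ lowerBounds (weight n w '' supp K n g)) :
    t + u ∈ lowerBounds (weight n w '' supp K n (f * g)) := by
  classical
  rintro - ⟨α, hα, rfl⟩
  obtain ⟨p, hp, hpne⟩ := Finset.exists_ne_zero_of_sum_ne_zero (by rwa [mem_supp, coeff_mul] at hα)
  rw [← Finset.HasAntidiagonal.mem_antidiagonal.1 hp, weight_add]
  exact add_le_add (hf ⟨p.1, left_ne_zero_of_mul hpne, rfl⟩)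
    (hg ⟨p.2, right_ne_zero_of_mul hpne, rfl⟩)

theorem weightPart_mul {t u : ℝ} {f g : MvPowerSeries (Fin n) K}
    (hf : t ∈ lowerBounds (weight n w '' supp K n f))
    (hg : u ∈ lowerBounds (weight n w '' supp K n g)) :
    weightPart w (t + u) (f * g) = weightPart w t f * weightPart w u g := by
  classical
  ext α
  rw [coeff_weightPart, coeff_mul, coeff_mul]
  split_ifs with hα
  · refine Finset.sum_congr rfl fun p hp => ?_
    rw [coeff_weightPart, coeff_weightPart]
    by_cases h0 : coeff p.1 f * coeff p.2 g = 0
    · split_ifs <;> simp [h0]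
    have h1 := hf ⟨p.1, left_ne_zero_of_mul h0, rfl⟩
    have h2 := hg ⟨p.2, right_ne_zero_of_mul h0, rfl⟩
    have h12 : weight n w p.1 + weight n w p.2 = t + u := by
      rw [← weight_add, Finset.HasAntidiagonal.mem_antidiagonal.1 hp, hα]
    rw [if_pos (by linarith), if_pos (by linarith)]
  · refine (Finset.sum_eq_zero fun p hp => ?_).symm
    rw [coeff_weightPart, coeff_weightPart]
    split_ifs with h1 h2 <;> try simp
    exact (hα (by rw [← Finset.HasAntidiagonal.mem_antidiagonal.1 hp, weight_add, h1, h2])).elim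

theorem initialForm_mul (hw : ∀ i, 0 < w i) {f g : MvPowerSeries (Fin n) K} (hf : f ≠ 0)
    (hg : g ≠ 0) : initialForm K n w (f * g) = initialForm K n w f * initialForm K n w g := by
  obtain ⟨t, ht⟩ := exists_isLeast_weight hw hf
  obtain ⟨u, hu⟩ := exists_isLeast_weight hw hg
  have hmul := weightPart_mul ht.2 hu.2
  have htu : IsLeast (weight n w '' supp K n (f * g)) (t + u) := by
    refine ⟨weightPart_ne_zero_iff.1 ?_, weight_mem_lowerBounds_mul ht.2 hu.2⟩
    rw [hmul]
    exact mul_ne_zero (weightPart_ne_zero_iff.2 ht.1) (weightPart_ne_zero_iff.2 hu.1)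
  rw [initialForm_eq_weightPart ht, initialForm_eq_weightPart hu, initialForm_eq_weightPart htu,
    hmul]

theorem initialForm_monomial (α : Fin n →₀ ℕ) {c : K} (hc : c ≠ 0) :
    initialForm K n w (monomial α c) = monomial α c := by
  classical
  have hsupp : supp K n (monomial α c) = {α} := by
    ext β
    simp [supp, coeff_monomial, hc]
  rw [initialForm_eq_weightPart (t := weight n w α) (by simp [hsupp])]
  ext β
  rw [coeff_weightPart, coeff_monomial]
  split_ifs with h1 h2 <;> simp_all

theorem initialForm_one : initialForm K n w (1 : MvPowerSeries (Fin n) K) = 1 := by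
  rw [← monomial_zero_one, initialForm_monomial 0 one_ne_zero]

end Weights

section InitialAlgebra

variable {K n} {w : Fin n → ℝ}

def initialForms (w : Fin n → ℝ) (A : Set (MvPowerSeries (Fin n) K)) :
    Set (MvPowerSeries (Fin n) K) :=
  {g | ∃ f ∈ A, f ≠ 0 ∧ initialForm K n w f = g}

theorem inAlgebra_eq_closedAdjoin (A : Set (MvPowerSeries (Fin n) K)) :
    inAlgebra K n w A = closedAdjoin K n (initialForms w A) := rfl

theorem toSubmodule_adjoin_initialForms (hw : ∀ i, 0 < w i)
    (A : Subalgebra K (MvPowerSeries (Fin n) K)) :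
    Subalgebra.toSubmodule (Algebra.adjoin K (initialForms w (A : Set (MvPowerSeries (Fin n) K)))) =
      Submodule.span K (initialForms w (A : Set (MvPowerSeries (Fin n) K))) := by
  let M : Submonoid (MvPowerSeries (Fin n) K) :=
    { carrier := initialForms w (A : Set (MvPowerSeries (Fin n) K))
      one_mem' := ⟨1, A.one_mem, one_ne_zero, initialForm_one⟩
      mul_mem' := by
        rintro - - ⟨f, hfA, hf0, rfl⟩ ⟨g, hgA, hg0, rfl⟩
        exact ⟨f * g, A.mul_mem hfA hgA, mul_ne_zero hf0 hg0, initialForm_mul hw hf0 hg0⟩ }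
  rw [Algebra.adjoin_eq_span]
  exact congrArg (Submodule.span K ∘ SetLike.coe) (Submonoid.closure_eq M)

theorem map_coeffsBelow_inAlgebra (hw : ∀ i, 0 < w i) (N : ℕ)
    (A : Subalgebra K (MvPowerSeries (Fin n) K)) :
    (Subalgebra.toSubmodule (inAlgebra K n w (A : Set (MvPowerSeries (Fin n) K)))).map
        (coeffsBelow K n N) =
      Submodule.span K
        (coeffsBelow K n N '' initialForms w (A : Set (MvPowerSeries (Fin n) K))) := by
  rw [inAlgebra_eq_closedAdjoin, map_coeffsBelow_closedAdjoin, toSubmodule_adjoin_initialForms hw,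
    Submodule.map_span]

theorem coeffsBelow_weightPart (N : ℕ) (t : ℝ) (f : MvPowerSeries (Fin n) K) :
    coeffsBelow K n N (weightPart w t f) =
      weightProj (weight n w ∘ Subtype.val) t (coeffsBelow K n N f) := by
  ext α
  rw [weightProj_apply, coeffsBelow_apply, coeffsBelow_apply, coeff_weightPart]
  rfl

theorem coeffsBelow_mem_weightSupported {N : ℕ} {S : Set ℝ} {f : MvPowerSeries (Fin n) K}
    (hf : ∀ α ∈ supp K n f, weight n w α ∈ S) :
    coeffsBelow K n N f ∈ weightSupported (weight n w ∘ Subtype.val) S := by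
  rw [mem_weightSupported]
  exact fun α hα => not_not.1 fun h => hα (hf α.1 h)

end InitialAlgebra

section GradedComparison

variable {K n} {w : Fin n → ℝ} {N : ℕ} {A : Subalgebra K (MvPowerSeries (Fin n) K)}

theorem gradedPiece_map_inAlgebra_le (hw : ∀ i, 0 < w i) (t : ℝ) :
    gradedPiece (weight n w ∘ Subtype.val)
        ((Subalgebra.toSubmodule (inAlgebra K n w (A : Set (MvPowerSeries (Fin n) K)))).map
          (coeffsBelow K n N)) t ≤
      gradedPiece (weight n w ∘ Subtype.val)
        ((Subalgebra.toSubmodule A).map (coeffsBelow K n N)) t := by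
  refine (Submodule.map_mono inf_le_left).trans ?_
  rw [map_coeffsBelow_inAlgebra hw, Submodule.map_span, Submodule.span_le]
  rintro - ⟨-, ⟨-, ⟨f, hfA, hf0, rfl⟩, rfl⟩, rfl⟩
  obtain ⟨u, hu⟩ := exists_isLeast_weight hw hf0
  rw [SetLike.mem_coe, initialForm_eq_weightPart hu, coeffsBelow_weightPart, weightProj_weightProj]
  split_ifs with htu
  · subst htu
    exact ⟨coeffsBelow K n N f, ⟨⟨f, hfA, rfl⟩,
      coeffsBelow_mem_weightSupported fun α hα => hu.2 ⟨α, hα, rfl⟩⟩, rfl⟩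
  · exact zero_mem _

/-- Replacing `f ∈ A` by its truncation below degree `N` (still in `A`, as `m^N ⊆ A`), the
initial form of the truncation realises the weight-`t` part of `coeffsBelow N f`. -/
theorem le_gradedPiece_map_inAlgebra (hN : ∀ f, coeffsBelow K n N f = 0 → f ∈ A) (t : ℝ) :
    gradedPiece (weight n w ∘ Subtype.val) ((Subalgebra.toSubmodule A).map (coeffsBelow K n N)) t ≤
      gradedPiece (weight n w ∘ Subtype.val)
        ((Subalgebra.toSubmodule (inAlgebra K n w (A : Set (MvPowerSeries (Fin n) K)))).map
          (coeffsBelow K n N)) t := by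
  rintro - ⟨-, ⟨⟨f, hfA, rfl⟩, hft⟩, rfl⟩
  by_cases h0 : weightProj (weight n w ∘ Subtype.val) t (coeffsBelow K n N f) = 0
  · rw [h0]
    exact zero_mem _
  set g : MvPowerSeries (Fin n) K := ↑(truncTotal N f)
  have hgA : g ∈ A := by
    simpa using A.add_mem (hN (g - f) (by rw [map_sub, coeffsBelow_truncTotal, sub_self])) hfA
  have hdeg : ∀ α ∈ supp K n g, α.degree < N := fun α hα =>
    not_le.1 fun h => hα (by simp [g, coeff_truncTotal_eq_zero _ h])
  have hg : IsLeast (weight n w '' supp K n g) t := by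
    obtain ⟨α, hα⟩ := Function.ne_iff.1 h0
    rw [weightProj_apply, Pi.zero_apply, ite_ne_right_iff] at hα
    refine ⟨⟨α.1, ?_, hα.1⟩, ?_⟩
    · rw [mem_supp, ← coeffsBelow_apply, coeffsBelow_truncTotal]
      exact hα.2
    · rintro - ⟨β, hβ, rfl⟩
      have hβ' := hβ
      rw [mem_supp, ← coeffsBelow_apply (α := ⟨β, hdeg β hβ⟩), coeffsBelow_truncTotal] at hβ'
      exact not_lt.1 fun h => hβ' ((mem_weightSupported.1 hft) ⟨β, hdeg β hβ⟩ (not_le.2 h))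
  have hg0 : g ≠ 0 := supp_nonempty_iff.1 (Set.image_nonempty.1 ⟨t, hg.1⟩)
  refine ⟨coeffsBelow K n N (initialForm K n w g),
    ⟨⟨_, subset_closedAdjoin _ ⟨g, hgA, hg0, rfl⟩, rfl⟩, ?_⟩, ?_⟩ <;>
    rw [initialForm_eq_weightPart hg, coeffsBelow_weightPart]
  · exact weightProj_mem_weightSupported (Set.mem_Ici.2 le_rfl) _
  · rw [weightProj_weightProj, if_pos rfl, coeffsBelow_truncTotal]

theorem finrank_map_coeffsBelow_inAlgebra (hw : ∀ i, 0 < w i)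
    (hN : ∀ f, coeffsBelow K n N f = 0 → f ∈ A) :
    Module.finrank K ((Subalgebra.toSubmodule
        (inAlgebra K n w (A : Set (MvPowerSeries (Fin n) K)))).map (coeffsBelow K n N)) =
      Module.finrank K ((Subalgebra.toSubmodule A).map (coeffsBelow K n N)) := by
  rw [finrank_eq_sum_finrank_gradedPiece (wt := weight n w ∘ Subtype.val),
    finrank_eq_sum_finrank_gradedPiece (wt := weight n w ∘ Subtype.val)]
  exact Finset.sum_congr rfl fun t _ => by
    rw [(gradedPiece_map_inAlgebra_le hw t).antisymm (le_gradedPiece_map_inAlgebra hN t)]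

/-- `in(A, w)` is closed and contains every monomial of degree `≥ N`, each being its own
initial form. -/
theorem mem_inAlgebra_of_coeffsBelow_eq_zero (hN : ∀ f, coeffsBelow K n N f = 0 → f ∈ A)
    {f : MvPowerSeries (Fin n) K} (hf : coeffsBelow K n N f = 0) :
    f ∈ inAlgebra K n w (A : Set (MvPowerSeries (Fin n) K)) := by
  classical
  intro M
  refine ⟨truncTotal M f, ?_, ?_⟩
  · rw [(truncTotal M f).as_sum, ← MvPolynomial.coeToMvPowerSeries.ringHom_apply, map_sum]
    refine Subalgebra.sum_mem _ fun α hα => Algebra.subset_adjoin ?_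
    have hc := MvPolynomial.mem_support_iff.1 hα
    have hαN : N ≤ α.degree := not_lt.1 fun h => hc (by
      rw [coeff_truncTotal_eq_ite, ← coeffsBelow_apply (α := ⟨α, h⟩), hf]
      simp)
    rw [MvPolynomial.coeToMvPowerSeries.ringHom_apply, MvPolynomial.coe_monomial]
    refine ⟨_, hN _ ?_, fun h => hc ?_, initialForm_monomial α hc⟩
    · ext β
      rw [coeffsBelow_apply, coeff_monomial, if_neg (fun h => (h ▸ β.2).not_ge hαN)]
      rfl
    · simpa using congrArg (coeff α) h
  · rw [← coeffsBelow_eq_zero_iff, map_sub, coeffsBelow_truncTotal, sub_self]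

end GradedComparison

theorem inAlgebra_le_iff_eq
    (s : ℕ) (f : Fin s → MvPowerSeries (Fin n) K)
    (A : Subalgebra K (MvPowerSeries (Fin n) K)) (hA : A = closedAdjoin K n (Set.range f))
    (hlen : FiniteColength K n A)
    (a b : Fin n → ℝ) (ha : ∀ i, 0 < a i) (hb : ∀ i, 0 < b i)
    (hab : inAlgebra K n a (A : Set (MvPowerSeries (Fin n) K)) ≤
      inAlgebra K n b (A : Set (MvPowerSeries (Fin n) K))) :
    inAlgebra K n a (A : Set (MvPowerSeries (Fin n) K)) =
      inAlgebra K n b (A : Set (MvPowerSeries (Fin n) K)) := by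
  subst hA
  obtain ⟨N, hN⟩ := exists_pow_mIdeal_le_of_finiteColength hlen
  have hNA (g) (hg : coeffsBelow K n N g = 0) : g ∈ closedAdjoin K n (Set.range f) :=
    hN g (coeffsBelow_eq_zero_iff.1 hg)
  have hker (w : Fin n → ℝ) :
      LinearMap.ker (coeffsBelow K n N) ≤ Subalgebra.toSubmodule (inAlgebra K n w _) :=
    fun g hg => mem_inAlgebra_of_coeffsBelow_eq_zero hNA hg
  have hmap := Submodule.eq_of_le_of_finrank_eq
    (Submodule.map_mono (f := coeffsBelow K n N) (Subalgebra.toSubmodule.monotone hab))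
    (by rw [finrank_map_coeffsBelow_inAlgebra ha hNA, finrank_map_coeffsBelow_inAlgebra hb hNA])
  exact Subalgebra.toSubmodule_injective (eq_of_map_eq_of_ker_le (hker a) (hker b) hmap)

end CanonicalFan
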